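/- arXiv:1206.4979 — 4 statements merged into one kernel-verified Lean document; each statement's English description precedes it below -/
import Mathlib

section
/- Let K be a field, f, g ∈ K[X], and let β be a root of g in an algebraic closure of K. Then g∘f is irreducible over K if and only if both g is irreducible over K and f − β is irreducible over K(β). -/
/-!
Let `α` be a root of `f - β` over `K(β)`. Then `f(α) = β`, so `α` is a root of `g ∘ f` and
`K(β) ⊆ K(α)`, whence `[K(α) : K] = [K(β) : K] · [K(β)(α) : K(β)]` by the tower law.
A polynomial with a root is irreducible exactly when its degree is the degree of that root, and
`deg (g ∘ f) = deg g · deg f` where each factor bounds the corresponding degree of the tower;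
the product of the bounds is attained iff both are.
-/

open Polynomial IntermediateField

theorem Polynomial.irreducible_iff_minpoly_natDegree_eq {F E : Type*} [Field F] [CommRing E]
    [IsDomain E] [Algebra F E] {p : F[X]} {x : E} (hp : p ≠ 0) (hx : aeval x p = 0) :
    Irreducible p ↔ (minpoly F x).natDegree = p.natDegree := by
  refine ⟨fun hirr => ?_, fun hdeg => ?_⟩
  · rw [minpoly.Irreducible.eq_minpoly hirr hx, natDegree_C_mul (leadingCoeff_ne_zero.mpr hp)]
  · have hint : IsIntegral F x := IsAlgebraic.isIntegral ⟨p, hp, hx⟩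
    exact (associated_of_dvd_of_natDegree_le (minpoly.dvd F x hx) hp hdeg.ge).irreducible
      (minpoly.irreducible hint)

theorem IntermediateField.restrictScalars_adjoin_simple_adjoin_simple_of_mem
    {F E : Type*} [Field F] [Field E] [Algebra F E] {α β : E} (hβ : β ∈ F⟮α⟯) :
    F⟮β⟯⟮α⟯.restrictScalars F = F⟮α⟯ := by
  have hbot : F⟮α⟯⟮β⟯ = ⊥ := adjoin_simple_eq_bot_iff.mpr (mem_bot.mpr ⟨⟨β, hβ⟩, rfl⟩)
  rw [adjoin_simple_comm, hbot, restrictScalars_bot_eq_self]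

theorem minpoly.natDegree_eq_mul_of_mem_adjoin_simple {F E : Type*} [Field F] [Field E]
    [Algebra F E] {α β : E} (hα : IsIntegral F α) (hβ : β ∈ F⟮α⟯) :
    (minpoly F α).natDegree = (minpoly F β).natDegree * (minpoly F⟮β⟯ α).natDegree := by
  have : FiniteDimensional F F⟮α⟯ := adjoin.finiteDimensional hα
  have hβint : IsIntegral F β := isIntegral_iff.mp (.of_finite F (⟨β, hβ⟩ : F⟮α⟯))
  have hαint : IsIntegral F⟮β⟯ α := hα.tower_top
  have : Module.Free F⟮β⟯ F⟮β⟯⟮α⟯ := .of_divisionRing _ _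
  rw [← adjoin.finrank hα, ← adjoin.finrank hβint, ← adjoin.finrank hαint,
    Module.finrank_mul_finrank F F⟮β⟯ F⟮β⟯⟮α⟯,
    ← restrictScalars_adjoin_simple_adjoin_simple_of_mem hβ]
  rfl

/-- Capelli's lemma: for f, g ∈ K[X] and β a root of g in an algebraic closure,
g∘f is irreducible over K iff g is irreducible over K and f − β is irreducible
over K(β). -/
theorem capelli {K : Type*} [Field K] (f g : K[X])
    (hf : 1 ≤ f.natDegree) (hg : 1 ≤ g.natDegree)
    (β : AlgebraicClosure K) (hβ : Polynomial.aeval β g = 0) :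
    Irreducible (g.comp f) ↔
      Irreducible g ∧
        Irreducible
          (f.map (algebraMap K (IntermediateField.adjoin K {β})) -
            Polynomial.C ⟨β, IntermediateField.mem_adjoin_simple_self K β⟩) := by
  set f' := f.map (algebraMap K K⟮β⟯) - C ⟨β, mem_adjoin_simple_self K β⟩
  have hf' : f'.natDegree = f.natDegree := by rw [natDegree_sub_C, natDegree_map]
  have hg0 : g ≠ 0 := ne_zero_of_natDegree_gt hg
  have hf'0 : f' ≠ 0 := ne_zero_of_natDegree_gt (hf' ▸ hf)
  have hgf0 : g.comp f ≠ 0 :=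
    ne_zero_of_natDegree_gt (n := 0) (by rw [natDegree_comp]; positivity)
  obtain ⟨α, hα⟩ := IsAlgClosed.exists_aeval_eq_zero (AlgebraicClosure K) f'
    (natDegree_pos_iff_degree_pos.mp (by omega)).ne'
  have hfα : aeval α f = β := by simpa [f', sub_eq_zero, aeval_map_algebraMap] using hα
  have hroot : aeval α (g.comp f) = 0 := by rw [aeval_comp, hfα, hβ]
  have hαint : IsIntegral K α := Algebra.IsIntegral.isIntegral α
  have hβmem : β ∈ K⟮α⟯ := hfα ▸ algebra_adjoin_le_adjoin K {α} (aeval_mem_adjoin_singleton K α)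
  rw [irreducible_iff_minpoly_natDegree_eq hgf0 hroot,
    irreducible_iff_minpoly_natDegree_eq hg0 hβ, irreducible_iff_minpoly_natDegree_eq hf'0 hα,
    hf', natDegree_comp, minpoly.natDegree_eq_mul_of_mem_adjoin_simple hαint hβmem]
  exact mul_eq_mul_iff_eq_and_eq_of_pos (natDegree_le_of_dvd (minpoly.dvd K β hβ) hg0)
    (hf' ▸ natDegree_le_of_dvd (minpoly.dvd _ α hα) hf'0)
    (minpoly.natDegree_pos (Algebra.IsIntegral.isIntegral β)) (by omega)
end

section
/- Let q = p^s and f(X) = X^p − a₁X − a₀ ∈ F_q[X] with a₁·a₀ ≠ 0. Then f is irreducible over F_q if and only if there exists b ∈ F_q with a₁ = b^{p−1} and Tr_{F_q/F_p}(a₀/b^p) ≠ 0. -/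
/-!
Substituting `X = b * Y` turns `X ^ p - b ^ (p - 1) * X - a₀` into
`b ^ p * (Y ^ p - Y - a₀ / b ^ p)`, and by the additive Hilbert 90, `Y ^ p - Y = c` is solvable
in `F` iff `Tr c = 0`. If `a₁` is not the `(p - 1)`-th power of a nonzero element, then
`x ↦ x ^ p - a₁ * x` is an injective additive endomorphism of `F`, hence surjective, and `f` has a
root. Conversely, if `f` has no root, let `g` be an irreducible factor of degree `d` with root `α`.
The Frobenius `σ : x ↦ x ^ #F` of `F(α)/F` moves `α` by `β = σ α - α ≠ 0`, and `β / b` is fixed by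
the `p`-th power map, so `σ ^ k α = α + k β`; since `σ ^ d = 1`, `p ∣ d`, and `g = f` up to a unit.
-/

open Polynomial

theorem Polynomial.natDegree_X_pow_sub_C_mul_X_sub_C {R : Type*} [CommRing R] [Nontrivial R]
    {n : ℕ} (hn : 1 < n) (a₁ a₀ : R) : (X ^ n - C a₁ * X - C a₀).natDegree = n := by
  rw [natDegree_sub_C, natDegree_sub_eq_left_of_natDegree_lt] <;>
    simp only [natDegree_X_pow]
  exact ((natDegree_C_mul_le a₁ X).trans natDegree_X_le).trans_lt hn

theorem Polynomial.isRoot_X_pow_sub_C_mul_X_sub_C {R : Type*} [CommRing R] {n : ℕ}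
    {a₁ a₀ r : R} : (X ^ n - C a₁ * X - C a₀).IsRoot r ↔ r ^ n - a₁ * r = a₀ := by
  simp [sub_eq_zero]

theorem Polynomial.irreducible_of_forall_irreducible_dvd {K : Type*} [Field K] {f : K[X]}
    (hf : 0 < f.natDegree) (h : ∀ g, Irreducible g → g ∣ f → f.natDegree ≤ g.natDegree) :
    Irreducible f := by
  have hf0 : f ≠ 0 := ne_zero_of_natDegree_gt hf
  obtain ⟨g, hg, u, rfl⟩ :=
    WfDvdMonoid.exists_irreducible_factor (not_isUnit_of_natDegree_pos f hf) hf0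
  have hu0 : u ≠ 0 := right_ne_zero_of_mul hf0
  have hu : u.natDegree = 0 := by
    have := h g hg (dvd_mul_right g u)
    rw [natDegree_mul hg.ne_zero hu0] at this
    omega
  rw [eq_C_of_natDegree_eq_zero hu] at hu0 ⊢
  exact (irreducible_mul_isUnit (isUnit_C.2 (Ne.isUnit (by simpa using hu0)))).2 hg

namespace FiniteField

section PrimeField

variable {p : ℕ} [Fact p.Prime] {F : Type*} [Field F] [Finite F] [Algebra (ZMod p) F]

theorem trace_pow_char (x : F) :
    Algebra.trace (ZMod p) F (x ^ p) = Algebra.trace (ZMod p) F x := by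
  simpa [ZMod.card] using
    Algebra.trace_eq_of_algEquiv (frobeniusAlgEquivOfAlgebraic (ZMod p) F) x

theorem finrank_ker_pow_char_sub_le_one {L : F →ₗ[ZMod p] F} (hL : ∀ y, L y = y ^ p - y) :
    Module.finrank (ZMod p) (LinearMap.ker L) ≤ 1 := by
  have hp : 1 < p := (Fact.out : p.Prime).one_lt
  have hcard : Nat.card (LinearMap.ker L) ≤ p := by
    calc Nat.card (LinearMap.ker L) = ((LinearMap.ker L : Set F)).ncard := Nat.card_coe_set_eq _
      _ ≤ ((X ^ p - X : F[X]).rootSet F).ncard := by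
        refine Set.ncard_le_ncard (fun y hy => ?_)
        rw [mem_rootSet_of_ne (X_pow_card_sub_X_ne_zero F hp)]
        simpa [hL, sub_eq_zero] using hy
      _ ≤ p := (ncard_rootSet_le _ _).trans (X_pow_card_sub_X_natDegree_eq F hp).le
  rw [Module.natCard_eq_pow_finrank (K := ZMod p), Nat.card_zmod] at hcard
  exact (Nat.pow_le_pow_iff_right hp).1 (by simpa using hcard)

theorem exists_pow_char_sub_eq_iff_trace_eq_zero (c : F) :
    (∃ y : F, y ^ p - y = c) ↔ Algebra.trace (ZMod p) F c = 0 := by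
  let L : F →ₗ[ZMod p] F :=
    (frobeniusAlgEquivOfAlgebraic (ZMod p) F).toLinearMap - LinearMap.id
  have hL : ∀ y, L y = y ^ p - y := by simp [L, ZMod.card]
  let T := Algebra.trace (ZMod p) F
  have hle : LinearMap.range L ≤ LinearMap.ker T := by
    rintro _ ⟨y, rfl⟩
    simp [T, hL, trace_pow_char]
  have hT : Module.finrank (ZMod p) (LinearMap.ker T) + 1 = Module.finrank (ZMod p) F := by
    have := T.finrank_range_add_finrank_ker
    rwa [LinearMap.range_eq_top.2 (Algebra.trace_surjective (ZMod p) F), finrank_top,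
      Module.finrank_self, add_comm] at this
  have heq : LinearMap.range L = LinearMap.ker T := by
    refine Submodule.eq_of_le_of_finrank_le hle ?_
    have := L.finrank_range_add_finrank_ker
    have := finrank_ker_pow_char_sub_le_one hL
    omega
  simpa [hL] using SetLike.ext_iff.1 heq c

theorem exists_pow_char_sub_mul_eq_iff_trace_eq_zero {b : F} (hb : b ≠ 0) (a : F) :
    (∃ r, r ^ p - b ^ (p - 1) * r = a) ↔ Algebra.trace (ZMod p) F (a / b ^ p) = 0 := by
  have hbp : b ^ p ≠ 0 := pow_ne_zero p hb
  have hscale : ∀ y, (b * y) ^ p - b ^ (p - 1) * (b * y) = b ^ p * (y ^ p - y) := fun y => by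
    rw [mul_pow, ← mul_assoc, pow_sub_one_mul (Fact.out : p.Prime).ne_zero]
    ring
  rw [← exists_pow_char_sub_eq_iff_trace_eq_zero]
  constructor
  · rintro ⟨r, rfl⟩
    refine ⟨r / b, ?_⟩
    rw [eq_div_iff hbp, mul_comm, ← hscale, mul_div_cancel₀ r hb]
  · rintro ⟨y, hy⟩
    exact ⟨b * y, by rw [hscale, hy, mul_div_cancel₀ a hbp]⟩

end PrimeField

section FiniteCharP

variable {p : ℕ} {F : Type*} [Field F] [CharP F p]

theorem exists_pow_char_sub_mul_eq_of_forall_pow_ne [Finite F] {a : F}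
    (ha : ∀ b ≠ 0, b ^ (p - 1) ≠ a) (c : F) : ∃ r, r ^ p - a * r = c := by
  have hp := CharP.char_is_prime F p
  have := Fact.mk hp
  let L : F →+ F := (frobenius F p : F →+ F) - AddMonoidHom.mulLeft a
  have hL : Function.Injective L := by
    refine (injective_iff_map_eq_zero L).2 fun r hr => by_contra fun hr0 => ha r hr0 ?_
    have hr' : r ^ (p - 1) * r = a * r := by
      rw [pow_sub_one_mul hp.ne_zero]
      exact sub_eq_zero.1 hr
    exact mul_right_cancel₀ hr0 hr'
  exact Finite.injective_iff_surjective.1 hL c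

theorem frobeniusAlgEquivOfAlgebraic_apply_of_pow_char_eq [Fintype F] (K : Type*) [Field K]
    [Algebra F K] [Algebra.IsAlgebraic F K] {x : K} (hx : x ^ p = x) :
    frobeniusAlgEquivOfAlgebraic F K x = x := by
  obtain ⟨n, hp, hq⟩ := card F p
  have := Fact.mk hp
  have : CharP K p := charP_of_injective_algebraMap (algebraMap F K).injective p
  change x ^ Fintype.card F = x
  rw [hq, ← iterate_frobenius]
  exact Function.iterate_fixed hx n

theorem frobeniusAlgEquivOfAlgebraic_pow_apply_of_root [Fintype F] {K : Type*} [Field K]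
    [Algebra F K] [Algebra.IsAlgebraic F K] {b a : F} (hb : b ≠ 0) {α : K}
    (hα : α ^ p - algebraMap F K b ^ (p - 1) * α = algebraMap F K a) (k : ℕ) :
    (frobeniusAlgEquivOfAlgebraic F K ^ k) α =
      α + k • (frobeniusAlgEquivOfAlgebraic F K α - α) := by
  have hp := CharP.char_is_prime F p
  have := Fact.mk hp
  have : CharP K p := charP_of_injective_algebraMap (algebraMap F K).injective p
  set σ := frobeniusAlgEquivOfAlgebraic F K
  set β := σ α - α
  set b' := algebraMap F K b
  have hb' : b' ≠ 0 := (_root_.map_ne_zero _).2 hb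
  have hσα : σ α ^ p - b' ^ (p - 1) * σ α = algebraMap F K a := by
    simpa [b'] using congrArg σ hα
  have hβ : (β / b') ^ p = β / b' := by
    rw [div_pow, div_eq_div_iff (pow_ne_zero _ hb') hb', ← pow_sub_one_mul hp.ne_zero b',
      sub_pow_char]
    linear_combination b' * (hσα - hα)
  have hσβ : σ β = β := by
    have := frobeniusAlgEquivOfAlgebraic_apply_of_pow_char_eq (F := F) K hβ
    rwa [map_div₀, AlgEquiv.commutes, div_left_inj' hb'] at this
  induction k with
  | zero => simp
  | succ k ih =>
    rw [pow_succ', AlgEquiv.mul_apply, ih, map_add, map_nsmul, hσβ, succ_nsmul]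
    simp only [β]
    abel

theorem char_dvd_natDegree_of_irreducible_dvd [Fintype F] {b a : F} (hb : b ≠ 0)
    (hroot : ∀ r, r ^ p - b ^ (p - 1) * r ≠ a) {g : F[X]} (hg : Irreducible g)
    (hgf : g ∣ X ^ p - C (b ^ (p - 1)) * X - C a) : p ∣ g.natDegree := by
  have := Fact.mk hg
  have : Module.Finite F (AdjoinRoot g) := (AdjoinRoot.powerBasis hg.ne_zero).finite
  have : Finite (AdjoinRoot g) := Module.finite_of_finite F
  have : CharP (AdjoinRoot g) p :=
    charP_of_injective_algebraMap (algebraMap F (AdjoinRoot g)).injective p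
  set σ := frobeniusAlgEquivOfAlgebraic F (AdjoinRoot g)
  set α := AdjoinRoot.root g
  have hα : α ^ p - algebraMap F _ b ^ (p - 1) * α = algebraMap F _ a := by
    simpa [sub_eq_zero, AdjoinRoot.algebraMap_eq] using
      (AdjoinRoot.isRoot_root g).dvd (map_dvd (algebraMap F (AdjoinRoot g)) hgf)
  have hσ : orderOf σ = g.natDegree := by
    rw [orderOf_frobeniusAlgEquivOfAlgebraic, (AdjoinRoot.powerBasis hg.ne_zero).finrank,
      AdjoinRoot.powerBasis_dim]
  -- if `σ` fixed `α` it would be trivial, making `g` linear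
  have hβ : σ α - α ≠ 0 := by
    intro h
    have hσ1 : σ = 1 := AlgEquiv.coe_toAlgHom_injective
      (AdjoinRoot.algHom_ext (by simpa [sub_eq_zero] using h))
    obtain ⟨r, hr⟩ := exists_root_of_degree_eq_one (p := g) (by
      rw [degree_eq_natDegree hg.ne_zero, ← hσ, hσ1, orderOf_one, Nat.cast_one])
    exact hroot r (isRoot_X_pow_sub_C_mul_X_sub_C.1 (hr.dvd hgf))
  have := frobeniusAlgEquivOfAlgebraic_pow_apply_of_root hb hα (orderOf σ)
  rw [pow_orderOf_eq_one, AlgEquiv.one_apply, left_eq_add, nsmul_eq_mul, mul_eq_zero,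
    hσ, CharP.cast_eq_zero_iff _ p] at this
  exact this.resolve_right hβ

theorem irreducible_X_pow_char_sub_C_mul_X_sub_C [Fintype F] {b a : F} (hb : b ≠ 0)
    (hroot : ∀ r, r ^ p - b ^ (p - 1) * r ≠ a) :
    Irreducible (X ^ p - C (b ^ (p - 1)) * X - C a) := by
  have hp := CharP.char_is_prime F p
  have hdeg := natDegree_X_pow_sub_C_mul_X_sub_C hp.one_lt (b ^ (p - 1)) a
  refine irreducible_of_forall_irreducible_dvd (hdeg.symm ▸ hp.pos) fun g hg hgf => ?_
  rw [hdeg]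
  exact Nat.le_of_dvd hg.natDegree_pos (char_dvd_natDegree_of_irreducible_dvd hb hroot hg hgf)

end FiniteCharP

end FiniteField

theorem artin_schreier_like_irreducible_general (p : ℕ) [Fact p.Prime]
    {F : Type*} [Field F] [Fintype F] [Algebra (ZMod p) F]
    (a₀ a₁ : F) :
    Irreducible (X ^ p - C a₁ * X - C a₀) ↔
      ∃ b : F, a₁ = b ^ (p - 1) ∧ Algebra.trace (ZMod p) F (a₀ / b ^ p) ≠ 0 := by
  have hp : p.Prime := Fact.out
  have : CharP F p := charP_of_injective_algebraMap (algebraMap (ZMod p) F).injective p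
  constructor
  · intro hirr
    have hroot : ¬∃ r, r ^ p - a₁ * r = a₀ := fun ⟨r, hr⟩ =>
      hirr.not_isRoot_of_natDegree_ne_one
        (by rw [natDegree_X_pow_sub_C_mul_X_sub_C hp.one_lt]; exact hp.one_lt.ne')
        (isRoot_X_pow_sub_C_mul_X_sub_C.2 hr)
    obtain ⟨b, hb, rfl⟩ : ∃ b ≠ 0, a₁ = b ^ (p - 1) := by
      by_contra! h
      exact hroot <|
        FiniteField.exists_pow_char_sub_mul_eq_of_forall_pow_ne (fun b hb => (h b hb).symm) a₀
    exact ⟨b, rfl, fun htr =>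
      hroot ((FiniteField.exists_pow_char_sub_mul_eq_iff_trace_eq_zero hb a₀).2 htr)⟩
  · rintro ⟨b, rfl, htr⟩
    have hb : b ≠ 0 := by
      rintro rfl
      simp [zero_pow hp.ne_zero] at htr
    exact FiniteField.irreducible_X_pow_char_sub_C_mul_X_sub_C hb fun r hr =>
      htr ((FiniteField.exists_pow_char_sub_mul_eq_iff_trace_eq_zero hb a₀).1 ⟨r, hr⟩)

/-- For f(X) = X^p − a₁X − a₀ over F_q, q = p^s, with a₁a₀ ≠ 0: f is irreducible over
F_q iff a₁ = b^{p−1} for some b with Tr_{F_q/F_p}(a₀/b^p) ≠ 0. -/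
theorem artin_schreier_like_irreducible (p : ℕ) [Fact p.Prime] (s : ℕ) (hs : 1 ≤ s)
    {F : Type*} [Field F] [Fintype F] [Algebra (ZMod p) F]
    (hcard : Fintype.card F = p ^ s)
    (a₀ a₁ : F) (ha : a₁ * a₀ ≠ 0) :
    Irreducible (X ^ p - C a₁ * X - C a₀) ↔
      ∃ b : F, a₁ = b ^ (p - 1) ∧ Algebra.trace (ZMod p) F (a₀ / b ^ p) ≠ 0 :=
  artin_schreier_like_irreducible_general p a₀ a₁
end

section
/- Let q = 3^s and f(X) = X³ − a₁X − a₀ ∈ F_q[X] with a₁·a₀ ≠ 0. Then f is irreducible over F_q if and only if there exists b ∈ F_q with a₁ = b² and Tr_{F_q/F_3}(a₀/b³) ≠ 0. -/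
/-!
A cubic is irreducible iff it has no root, i.e. iff `x ^ 3 - a₁ * x = a₀` has no solution.
In characteristic 3 the map `x ↦ x ^ 3 - a₁ * x` is additive, and its kernel is trivial unless
`a₁` is a square; so for non-square `a₁` it is bijective and the cubic has a root. For `a₁ = b ^ 2`
the substitution `x = b * y` turns the equation into `y ^ 3 - y = a₀ / b ^ 3`, and the image of the
Artin–Schreier map `y ↦ y ^ q - y` of a finite extension of `𝔽_q` is exactly the kernel of the
trace: it lies in that kernel since the trace is Frobenius invariant, and both have codimension 1
because the Artin–Schreier kernel consists of roots of `X ^ q - X`.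
-/

open Polynomial Module

namespace FiniteField

variable (K L : Type*) [Field K] [Fintype K] [Field L] [Algebra K L]

noncomputable def artinSchreierMap : L →ₗ[K] L :=
  (frobeniusAlgHom K L).toLinearMap - LinearMap.id

variable {K L}

@[simp]
theorem artinSchreierMap_apply (y : L) :
    artinSchreierMap K L y = y ^ Fintype.card K - y := rfl

variable [Finite L]

theorem finrank_ker_artinSchreierMap_le :
    finrank K (LinearMap.ker (artinSchreierMap K L)) ≤ 1 := by
  have hq : 1 < Fintype.card K := Fintype.one_lt_card
  have hroots : (LinearMap.ker (artinSchreierMap K L) : Set L) ⊆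
      (X ^ Fintype.card K - X : K[X]).rootSet L := fun y hy ↦ by
    rw [mem_rootSet, map_sub, map_pow, aeval_X]
    exact ⟨X_pow_card_sub_X_ne_zero K hq, hy⟩
  have hcard : Nat.card (LinearMap.ker (artinSchreierMap K L)) ≤ Fintype.card K :=
    calc Nat.card (LinearMap.ker (artinSchreierMap K L))
        ≤ ((X ^ Fintype.card K - X : K[X]).rootSet L).ncard := by
          rw [← Nat.card_coe_set_eq]; exact Set.ncard_le_ncard hroots
      _ ≤ Fintype.card K := (ncard_rootSet_le _ L).trans (X_pow_card_sub_X_natDegree_eq K hq).le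
  rw [natCard_eq_pow_finrank (K := K), Nat.card_eq_fintype_card] at hcard
  by_contra! h
  exact (Nat.pow_lt_pow_right hq h).not_ge (by simpa using hcard)

theorem range_artinSchreierMap_le_ker_trace :
    LinearMap.range (artinSchreierMap K L) ≤ LinearMap.ker (Algebra.trace K L) := by
  rintro _ ⟨y, rfl⟩
  rw [LinearMap.mem_ker, artinSchreierMap_apply, map_sub, sub_eq_zero]
  exact Algebra.trace_eq_of_algEquiv (frobeniusAlgEquivOfAlgebraic K L) y

theorem range_artinSchreierMap :
    LinearMap.range (artinSchreierMap K L) = LinearMap.ker (Algebra.trace K L) := by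
  refine Submodule.eq_of_le_of_finrank_le range_artinSchreierMap_le_ker_trace ?_
  have h₁ := LinearMap.finrank_range_add_finrank_ker (artinSchreierMap K L)
  have h₂ := LinearMap.finrank_range_add_finrank_ker (Algebra.trace K L)
  rw [LinearMap.range_eq_top.2 (Algebra.trace_surjective K L), finrank_top, finrank_self] at h₂
  have := finrank_ker_artinSchreierMap_le (K := K) (L := L)
  omega

theorem exists_pow_card_sub_self_eq_iff_trace_eq_zero (c : L) :
    (∃ y : L, y ^ Fintype.card K - y = c) ↔ Algebra.trace K L c = 0 := by
  simp [← LinearMap.mem_ker, ← range_artinSchreierMap]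

end FiniteField

namespace Polynomial

theorem irreducible_X_pow_three_sub_C_mul_X_sub_C_iff {R : Type*} [CommRing R] [IsDomain R]
    (a b : R) : Irreducible (X ^ 3 - C a * X - C b) ↔ ¬∃ x : R, x ^ 3 - a * x = b := by
  have hmonic : (X ^ 3 - C a * X - C b).Monic := by monicity!
  have hdeg : (X ^ 3 - C a * X - C b).natDegree = 3 := by compute_degree!
  rw [hmonic.irreducible_iff_roots_eq_zero_of_degree_le_three (by omega) (by omega),
    Multiset.eq_zero_iff_forall_notMem, not_exists]
  refine forall_congr' fun x ↦ ?_
  simp [mem_roots hmonic.ne_zero, sub_eq_zero]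

end Polynomial

theorem surjective_pow_char_sub_mul_of_forall_pow_ne {F : Type*} [Field F] [Finite F]
    (p : ℕ) [hp : Fact p.Prime] [CharP F p] {a : F} (ha : ∀ b : F, b ^ (p - 1) ≠ a) :
    Function.Surjective fun x : F ↦ x ^ p - a * x := by
  refine Finite.surjective_of_injective fun x y hxy ↦ by_contra fun hne ↦ ?_
  have hz : x - y ≠ 0 := sub_ne_zero.2 hne
  have hpow : (x - y) ^ (p - 1) * (x - y) = a * (x - y) := by
    rw [← pow_succ, Nat.sub_add_cancel hp.out.one_le, sub_pow_char]
    linear_combination hxy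
  exact ha (x - y) (mul_right_cancel₀ hz hpow)

theorem exists_cube_sub_sq_mul_eq_iff {F : Type*} [Field F] {b : F} (hb : b ≠ 0) (c : F) :
    (∃ x : F, x ^ 3 - b ^ 2 * x = c) ↔ ∃ y : F, y ^ 3 - y = c / b ^ 3 := by
  constructor
  · rintro ⟨x, rfl⟩
    exact ⟨x / b, by field_simp⟩
  · rintro ⟨y, hy⟩
    refine ⟨b * y, ?_⟩
    rw [eq_div_iff (pow_ne_zero 3 hb)] at hy
    linear_combination hy

theorem exists_cube_sub_sq_mul_eq_iff_trace_eq_zero {F : Type*} [Field F] [Finite F]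
    [Algebra (ZMod 3) F] {b : F} (hb : b ≠ 0) (c : F) :
    (∃ x : F, x ^ 3 - b ^ 2 * x = c) ↔ Algebra.trace (ZMod 3) F (c / b ^ 3) = 0 := by
  rw [exists_cube_sub_sq_mul_eq_iff hb,
    ← FiniteField.exists_pow_card_sub_self_eq_iff_trace_eq_zero, ZMod.card]

theorem cubic_irreducible_no_quadratic_term_general
    {F : Type*} [Field F] [Fintype F] [Algebra (ZMod 3) F]
    (a₀ a₁ : F) (ha : a₁ * a₀ ≠ 0) :
    Irreducible (X ^ 3 - C a₁ * X - C a₀) ↔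
      ∃ b : F, a₁ = b ^ 2 ∧ Algebra.trace (ZMod 3) F (a₀ / b ^ 3) ≠ 0 := by
  have : CharP F 3 := charP_of_injective_algebraMap (algebraMap (ZMod 3) F).injective 3
  have ha₁ : a₁ ≠ 0 := left_ne_zero_of_mul ha
  rw [irreducible_X_pow_three_sub_C_mul_X_sub_C_iff]
  constructor
  · intro hnoroot
    by_cases hsq : ∃ b, a₁ = b ^ 2
    · obtain ⟨b, rfl⟩ := hsq
      rw [exists_cube_sub_sq_mul_eq_iff_trace_eq_zero (ne_zero_pow two_ne_zero ha₁)] at hnoroot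
      exact ⟨b, rfl, hnoroot⟩
    · exact absurd (surjective_pow_char_sub_mul_of_forall_pow_ne 3
        (fun b hb ↦ hsq ⟨b, hb.symm⟩) a₀) hnoroot
  · rintro ⟨b, rfl, htrace⟩
    rwa [exists_cube_sub_sq_mul_eq_iff_trace_eq_zero (ne_zero_pow two_ne_zero ha₁)]

/-- For f(X) = X³ − a₁X − a₀ over F_q, q = 3^s, with a₁a₀ ≠ 0: f is irreducible over
F_q iff a₁ = b² for some b with Tr_{F_q/F_3}(a₀/b³) ≠ 0. -/
theorem cubic_irreducible_no_quadratic_term (s : ℕ) (hs : 1 ≤ s)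
    {F : Type*} [Field F] [Fintype F] [Algebra (ZMod 3) F]
    (hcard : Fintype.card F = 3 ^ s)
    (a₀ a₁ : F) (ha : a₁ * a₀ ≠ 0) :
    Irreducible (X ^ 3 - C a₁ * X - C a₀) ↔
      ∃ b : F, a₁ = b ^ 2 ∧ Algebra.trace (ZMod 3) F (a₀ / b ^ 3) ≠ 0 :=
  cubic_irreducible_no_quadratic_term_general a₀ a₁ ha
end

section
/- Let q = 3^s and let f ∈ F_q[X] be of the form f(X) = a₃X³ − a₁X − a₀ with a₃ ≠ 0. Then at least one of the polynomials f, f∘f, f∘f∘f is reducible over F_q. In particular, no such polynomial is stable over F_q. -/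
open Polynomial

/-- The n-th compositional iterate of a polynomial: f⁽⁰⁾ = X and f⁽ⁿ⁾ = f⁽ⁿ⁻¹⁾ ∘ f. -/
noncomputable def polyIter {K : Type*} [Field K] (f : K[X]) : ℕ → K[X]
  | 0 => Polynomial.X
  | n + 1 => (polyIter f n).comp f

/-! Write `f = L - a₀` with `L x = a₃ x³ - a₁ x`, which is additive in characteristic 3. A root `α`
of `f ∘ f` satisfies `L (L α) = a₀ + L a₀ ∈ 𝔽_q`, so `k = α ^ q - α` lies in the kernel of `L ∘ L`.
The Frobenius `σ` acts on `ker L ⊆ {0, r, -r}` by a sign `ε`, hence `(σ - ε)² k = 0`, and in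
characteristic 3 this forces `∑_{i<6} σⁱ k = 0`, i.e. `α ^ q⁶ = α`. So `α` has degree dividing 6
over `𝔽_q`, and `f ∘ f`, of degree 9, is reducible. -/

open Finset

section AddGroup
variable {M : Type*} [AddCommGroup M]

theorem iterate_eq_add_sum_range (σ : M →+ M) (α : M) (n : ℕ) :
    σ^[n] α = α + ∑ i ∈ range n, σ^[i] (σ α - α) := by
  induction n with
  | zero => simp
  | succ n ih =>
    rw [sum_range_succ, ← add_assoc, ← ih, iterate_map_sub, ← Function.iterate_succ_apply,
      Function.iterate_succ_apply']
    abel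

theorem sum_range_six_iterate_eq_zero (h3 : ∀ x : M, 3 • x = 0) (σ : M →+ M) (ε : ℤˣ)
    {k w : M} (hk : σ k = ε • k + w) (hw : σ w = ε • w) :
    ∑ i ∈ range 6, σ^[i] k = 0 := by
  rcases Int.units_eq_one_or ε with rfl | rfl
  · simp only [sum_range_succ, range_one, sum_singleton, Function.iterate_zero, id_eq,
      Function.iterate_succ_apply', map_add, hk, hw, one_smul]
    rw [← h3 (2 • k + 5 • w)]
    abel
  · simp only [sum_range_succ, range_one, sum_singleton, Function.iterate_zero, id_eq,
      Function.iterate_succ_apply', map_add, map_neg, hk, hw,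
      Units.neg_smul, one_smul]
    rw [← h3 w]
    abel

theorem iterate_six_eq_self (h3 : ∀ x : M, 3 • x = 0) (σ L : M →+ M)
    (hcomm : ∀ x, L (σ x) = σ (L x)) (ε : ℤˣ) (hε : ∀ x, L x = 0 → σ x = ε • x) {α : M}
    (hα : σ (L (L α)) = L (L α)) : σ^[6] α = α := by
  set k := σ α - α
  have hLk : L (L k) = 0 := by simp only [k, map_sub, hcomm, hα, sub_self]
  have hLw : L (σ k - ε • k) = 0 := by
    rw [map_sub, map_zsmul_unit, hcomm, hε _ hLk, sub_self]
  rw [iterate_eq_add_sum_range, sum_range_six_iterate_eq_zero h3 σ ε (w := σ k - ε • k)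
    (add_sub_cancel _ _).symm (hε _ hLw), add_zero]

end AddGroup

section LinearizedCubic
variable {R : Type*} [CommRing R] [ExpChar R 3]

def linearizedCubic (a b : R) : R →+ R :=
  AddMonoidHom.mk' (fun x => a * x ^ 3 - b * x) fun x y => by rw [add_pow_expChar]; ring

@[simp]
theorem linearizedCubic_apply (a b x : R) : linearizedCubic a b x = a * x ^ 3 - b * x := rfl

theorem map_linearizedCubic {K S : Type*} [CommRing K] [ExpChar K 3] [CommRing S] [ExpChar S 3]
    [Algebra K R] [Algebra K S] (φ : R →ₐ[K] S) (a b : K) (x : R) :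
    φ (linearizedCubic (algebraMap K R a) (algebraMap K R b) x) =
      linearizedCubic (algebraMap K S a) (algebraMap K S b) (φ x) := by
  simp

theorem linearizedCubic_algebraMap {K : Type*} [CommRing K] [ExpChar K 3] [Algebra K R]
    (a b x : K) :
    linearizedCubic (algebraMap K R a) (algebraMap K R b) (algebraMap K R x) =
      algebraMap K R (linearizedCubic a b x) := by
  simp

variable [IsDomain R] {a b : R}

theorem eq_zero_or_eq_or_eq_neg_of_linearizedCubic_eq_zero (ha : a ≠ 0) {x y : R}
    (hx : linearizedCubic a b x = 0) (hy : linearizedCubic a b y = 0) (hx0 : x ≠ 0) :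
    y = 0 ∨ y = x ∨ y = -x := by
  have hsq {z : R} (hz : linearizedCubic a b z = 0) (hz0 : z ≠ 0) : a * z ^ 2 = b := by
    have : z * (a * z ^ 2 - b) = 0 := by rw [← hz, linearizedCubic_apply]; ring
    exact sub_eq_zero.mp ((mul_eq_zero.mp this).resolve_left hz0)
  by_cases hy0 : y = 0
  · exact Or.inl hy0
  have : a * ((y - x) * (y + x)) = 0 := by linear_combination hsq hy hy0 - hsq hx hx0
  rcases mul_eq_zero.mp ((mul_eq_zero.mp this).resolve_left ha) with h | h
  · exact Or.inr (Or.inl (sub_eq_zero.mp h))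
  · exact Or.inr (Or.inr (eq_neg_of_add_eq_zero_left h))

theorem exists_sign_of_commute_linearizedCubic (ha : a ≠ 0) (σ : R →+ R)
    (hσ : Function.Injective σ)
    (hcomm : ∀ x, linearizedCubic a b (σ x) = σ (linearizedCubic a b x)) :
    ∃ ε : ℤˣ, ∀ x, linearizedCubic a b x = 0 → σ x = ε • x := by
  by_cases h : ∃ r ≠ 0, linearizedCubic a b r = 0
  · obtain ⟨r, hr0, hr⟩ := h
    have hker {x : R} (hx : linearizedCubic a b x = 0) : x = 0 ∨ x = r ∨ x = -r :=
      eq_zero_or_eq_or_eq_neg_of_linearizedCubic_eq_zero ha hr hx hr0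
    obtain ⟨ε, hε⟩ : ∃ ε : ℤˣ, σ r = ε • r := by
      rcases hker (x := σ r) (by rw [hcomm, hr, map_zero]) with h | h | h
      · exact absurd h ((map_ne_zero_iff σ hσ).mpr hr0)
      · exact ⟨1, by rw [h, one_smul]⟩
      · exact ⟨-1, by rw [h, Units.neg_smul, one_smul]⟩
    refine ⟨ε, fun x hx => ?_⟩
    rcases hker hx with rfl | rfl | rfl <;> simp [hε]
  · refine ⟨1, fun x hx => ?_⟩
    obtain rfl : x = 0 := by_contra fun hx0 => h ⟨x, hx0, hx⟩
    simp

end LinearizedCubic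

theorem natDegree_dvd_of_root_pow_card_pow_eq_root {F : Type*} [Field F] [Fintype F] {g : F[X]}
    [Fact (Irreducible g)] {n : ℕ}
    (h : AdjoinRoot.root g ^ Fintype.card F ^ n = AdjoinRoot.root g) : g.natDegree ∣ n := by
  have hg0 : g ≠ 0 := (Fact.out : Irreducible g).ne_zero
  have : Module.Finite F (AdjoinRoot g) := (AdjoinRoot.powerBasis hg0).finite
  have : Finite (AdjoinRoot g) := Module.finite_of_finite F
  rw [← AdjoinRoot.powerBasis_dim hg0, ← (AdjoinRoot.powerBasis hg0).finrank,
    ← FiniteField.orderOf_frobeniusAlgEquivOfAlgebraic]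
  refine orderOf_dvd_of_pow_eq_one (AlgEquiv.coe_toAlgHom_injective (AdjoinRoot.algHom_ext ?_))
  simpa [FiniteField.coe_frobeniusAlgEquivOfAlgebraic_iterate] using h

theorem not_irreducible_cubic_comp_self {F : Type*} [Field F] [Fintype F] [CharP F 3]
    (a₀ a₁ a₃ : F) (ha₃ : a₃ ≠ 0) :
    ¬ Irreducible ((C a₃ * X ^ 3 - C a₁ * X - C a₀).comp (C a₃ * X ^ 3 - C a₁ * X - C a₀)) := by
  set f : F[X] := C a₃ * X ^ 3 - C a₁ * X - C a₀
  intro hg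
  have : Fact (Irreducible (f.comp f)) := ⟨hg⟩
  set E := AdjoinRoot (f.comp f)
  have : Module.Finite F E := (AdjoinRoot.powerBasis hg.ne_zero).finite
  have : CharP E 3 := charP_of_injective_algebraMap (algebraMap F E).injective 3
  set φ := FiniteField.frobeniusAlgEquivOfAlgebraic F E
  set L := linearizedCubic (algebraMap F E a₃) (algebraMap F E a₁)
  have hf (x : E) : aeval x f = L x - algebraMap F E a₀ := by simp [f, L]
  have hLL : L (L (AdjoinRoot.root _)) = algebraMap F E (a₀ + linearizedCubic a₃ a₁ a₀) := by
    have h := AdjoinRoot.aeval_eq (f := f.comp f) (f.comp f)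
    rw [AdjoinRoot.mk_self, aeval_comp, hf, hf, map_sub] at h
    rw [map_add, ← linearizedCubic_algebraMap]
    linear_combination h
  have hcomm (x : E) : L (φ x) = φ (L x) := (map_linearizedCubic φ.toAlgHom _ _ x).symm
  obtain ⟨ε, hε⟩ := exists_sign_of_commute_linearizedCubic (by simpa using ha₃)
    φ.toAddMonoidHom φ.injective hcomm
  have h3 (x : E) : 3 • x = 0 := by rw [nsmul_eq_mul, CharP.cast_eq_zero, zero_mul]
  have h6 : AdjoinRoot.root (f.comp f) ^ Fintype.card F ^ 6 = AdjoinRoot.root (f.comp f) := by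
    have : φ^[6] (AdjoinRoot.root (f.comp f)) = AdjoinRoot.root (f.comp f) :=
      iterate_six_eq_self h3 φ.toAddMonoidHom L hcomm ε hε (by rw [hLL]; exact φ.commutes _)
    rwa [FiniteField.coe_frobeniusAlgEquivOfAlgebraic_iterate] at this
  have := natDegree_dvd_of_root_pow_card_pow_eq_root h6
  have hf3 : f.natDegree = 3 := by simp only [f]; compute_degree!
  rw [natDegree_comp, hf3] at this
  norm_num at this

theorem cubic_not_stable_char_three_general (s : ℕ)
    {F : Type*} [Field F] [Fintype F] (hcard : Fintype.card F = 3 ^ s)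
    (a₀ a₁ a₃ : F) (ha₃ : a₃ ≠ 0) :
    (¬ Irreducible (C a₃ * X ^ 3 - C a₁ * X - C a₀) ∨
      ¬ Irreducible ((C a₃ * X ^ 3 - C a₁ * X - C a₀).comp
          (C a₃ * X ^ 3 - C a₁ * X - C a₀)) ∨
      ¬ Irreducible (((C a₃ * X ^ 3 - C a₁ * X - C a₀).comp
          (C a₃ * X ^ 3 - C a₁ * X - C a₀)).comp
          (C a₃ * X ^ 3 - C a₁ * X - C a₀))) ∧
      ¬ ∀ n : ℕ, 1 ≤ n → Irreducible (polyIter (C a₃ * X ^ 3 - C a₁ * X - C a₀) n) := by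
  have : CharP F 3 := charP_of_card_eq_prime_pow hcard
  have hcomp := not_irreducible_cubic_comp_self a₀ a₁ a₃ ha₃
  exact ⟨Or.inr (Or.inl hcomp), fun h => hcomp (by simpa [polyIter] using h 2 one_le_two)⟩

/-- In characteristic 3, for f(X) = a₃X³ − a₁X − a₀ with a₃ ≠ 0, at least one of
f, f∘f, f∘f∘f is reducible over F_q; in particular f is not stable. -/
theorem cubic_not_stable_char_three (s : ℕ) (hs : 1 ≤ s)
    {F : Type*} [Field F] [Fintype F] (hcard : Fintype.card F = 3 ^ s)
    (a₀ a₁ a₃ : F) (ha₃ : a₃ ≠ 0) :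
    (¬ Irreducible (C a₃ * X ^ 3 - C a₁ * X - C a₀) ∨
      ¬ Irreducible ((C a₃ * X ^ 3 - C a₁ * X - C a₀).comp
          (C a₃ * X ^ 3 - C a₁ * X - C a₀)) ∨
      ¬ Irreducible (((C a₃ * X ^ 3 - C a₁ * X - C a₀).comp
          (C a₃ * X ^ 3 - C a₁ * X - C a₀)).comp
          (C a₃ * X ^ 3 - C a₁ * X - C a₀))) ∧
      ¬ ∀ n : ℕ, 1 ≤ n → Irreducible (polyIter (C a₃ * X ^ 3 - C a₁ * X - C a₀) n) :=
  cubic_not_stable_char_three_general s hcard a₀ a₁ a₃ ha₃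
end
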